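/- arXiv:1909.03387 — 6 statements merged into one kernel-verified Lean document; each statement's English description precedes it below -/
import Mathlib

section
/- In the locally convex cone (P, V), where V = (0,∞) and the relation a_i ⪯ b_j + v holds iff (i = j and a ≤ b + j·v) or i = 0 or j = ∞, the symmetric neighborhoods satisfy: v(0₀)v = {0₀}, v(∞_∞)v = {∞_∞}, and for j ∈ ℕ (j ≠ 0, ∞), v(b_j)v = {a_j : a ∈ [b − jv, ∞) ∩ (0, b + jv]}. In particular every element of a symmetric neighborhood of an element has the same index as that element. -/
open scoped NNReal ENNReal

/-- The positive reals, used for the values `a` in elements `a_i`. -/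
abbrev Rpos := {a : ℝ // 0 < a}

/-- The cone `P = {a_i : a ∈ (0,∞), i ∈ ℕ} ∪ {0₀, ∞_∞}`. -/
inductive CP : Type where
  | zero : CP
  | inf : CP
  | elt : Rpos → ℕ+ → CP

namespace CP

/-- Addition on `P`. -/
def add : CP → CP → CP
  | zero, x => x
  | x, zero => x
  | inf, _ => inf
  | _, inf => inf
  | elt a i, elt b j =>
      if i = j then elt ⟨a.1 + b.1, add_pos a.2 b.2⟩ i else inf

/-- Scalar multiplication by nonnegative reals on `P`. -/
noncomputable def smul (r : ℝ≥0) (x : CP) : CP :=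
  if h : r = 0 then zero
  else
    match x with
    | zero => zero
    | inf => inf
    | elt a i => elt ⟨(r : ℝ) * a.1,
        mul_pos (by exact_mod_cast pos_iff_ne_zero.mpr h) a.2⟩ i

/-- The preorder on `P`: `a_i ⪯ b_j` iff `i = j` and `a ≤ b`. -/
def le : CP → CP → Prop
  | zero, zero => True
  | inf, inf => True
  | elt a i, elt b j => i = j ∧ a.1 ≤ b.1
  | _, _ => False

/-- The neighborhood relation: `nrel v x y` means `x ⪯ y + v`. -/
def nrel (v : ℝ) : CP → CP → Prop
  | zero, _ => True
  | _, inf => True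
  | elt a i, elt b j => i = j ∧ a.1 ≤ b.1 + (i : ℝ) * v
  | _, _ => False

/-- The subcone `Q_j = {b_j : b ∈ (0,∞)} ∪ {0₀, ∞_∞}`. -/
def Q (j : ℕ+) : Set CP := {x | x = zero ∨ x = inf ∨ ∃ a : Rpos, x = elt a j}

/-- Symmetric neighborhood of `b` relative to the subcone `Qs`. -/
def symN (Qs : Set CP) (v : ℝ) (b : CP) : Set CP :=
  {a ∈ Qs | nrel v a b ∧ nrel v b a}

/-- Linearity of a functional `μ : P → ℝ ∪ {+∞}` relative to a subcone. -/
def IsLinearOn (Qs : Set CP) (μ : CP → EReal) : Prop :=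
  μ zero = 0 ∧ (∀ x, μ x ≠ ⊥) ∧
  (∀ x ∈ Qs, ∀ y ∈ Qs, μ (add x y) = μ x + μ y) ∧
  (∀ r : ℝ≥0, ∀ x ∈ Qs, μ (smul r x) = ((r : ℝ) : EReal) * μ x)

/-- (Uniform) continuity of a functional relative to a subcone. -/
def IsContOn (Qs : Set CP) (μ : CP → EReal) : Prop :=
  ∃ v : ℝ, 0 < v ∧ ∀ x ∈ Qs, ∀ y ∈ Qs, nrel v x y → μ x ≤ μ y + 1

/-- Membership in the dual cone of the subcone `Qs`. -/
def InDualOn (Qs : Set CP) (μ : CP → EReal) : Prop :=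
  IsLinearOn Qs μ ∧ IsContOn Qs μ

/-- `λ B = {(λx, λy) : (x,y) ∈ B}`. -/
def scaleSet (l : ℝ≥0) (B : Set (CP × CP)) : Set (CP × CP) :=
  (fun p => (smul l p.1, smul l p.2)) '' B

/-- `B` is a barrel in the subcone `Qs`. -/
def IsBarrelOn (Qs : Set CP) (B : Set (CP × CP)) : Prop :=
  (∀ p ∈ B, p.1 ∈ Qs ∧ p.2 ∈ Qs) ∧
  (∀ p ∈ B, ∀ q ∈ B, ∀ t : ℝ≥0, t ≤ 1 →
     (add (smul t p.1) (smul (1 - t) q.1),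
      add (smul t p.2) (smul (1 - t) q.2)) ∈ B) ∧
  (∀ b ∈ Qs, ∃ v : ℝ, 0 < v ∧ ∀ a ∈ symN Qs v b,
     ∃ l : ℝ≥0, 0 < l ∧ (a, b) ∈ scaleSet l B) ∧
  (∀ a ∈ Qs, ∀ b ∈ Qs, (a, b) ∉ B → ∃ μ : CP → EReal, InDualOn Qs μ ∧
     μ b + 1 < μ a ∧ ∀ p ∈ B, μ p.1 ≤ μ p.2 + 1)

/-- The subcone `Qs` is barreled. -/
def BarreledOn (Qs : Set CP) : Prop :=
  ∀ B, IsBarrelOn Qs B → ∀ b ∈ Qs, ∃ v : ℝ, 0 < v ∧ ∃ l : ℝ≥0, 0 < l ∧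
    ∀ a ∈ symN Qs v b, (a, b) ∈ scaleSet l B

/-- The subcone `Qs` is upper-barreled. -/
def UpperBarreledOn (Qs : Set CP) : Prop :=
  ∀ B, IsBarrelOn Qs B → ∃ v : ℝ, 0 < v ∧
    ∀ p : CP × CP, p.1 ∈ Qs → p.2 ∈ Qs → nrel v p.1 p.2 → p ∈ B

/-- The functional `∞̄` (resp. its extension `∞̄~`). -/
noncomputable def fnBarInf : CP → EReal
  | zero => 0
  | _ => ⊤

/-- The functional `0̄_k` (resp. its extension). -/
noncomputable def fnBarZero (k : ℕ+) : CP → EReal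
  | zero => 0
  | inf => ⊤
  | elt _ i => if i = k then 0 else ⊤

/-- The functional `c_k : a_k ↦ c·a` (extended by `+∞` off `Q_k`). -/
noncomputable def fnLam (c : ℝ) (k : ℕ+) : CP → EReal
  | zero => 0
  | inf => ⊤
  | elt a i => if i = k then ((c * a.1 : ℝ) : EReal) else ⊤

/-- The zero functional. -/
noncomputable def fnZero : CP → EReal := fun _ => 0

/-- The barrel `B_j = {(x,y) ∈ Q_j² : x ⪯ y + w/j}`. -/
def Bset (w : ℝ) (j : ℕ+) : Set (CP × CP) :=
  {p | p.1 ∈ Q j ∧ p.2 ∈ Q j ∧ nrel (w / (j : ℝ)) p.1 p.2}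

/-- The barrel `B = ⋃_j B_j`. -/
def BigB (w : ℝ) : Set (CP × CP) := ⋃ (j : ℕ+), Bset w j

/-- The map `Λ : Q_j → [0,∞]`, `a_j ↦ a/j`. -/
noncomputable def Lam (j : ℕ+) : CP → ℝ≥0∞
  | zero => 0
  | inf => ⊤
  | elt a _ => ENNReal.ofReal (a.1 / (j : ℝ))


/-- description of the symmetric neighborhoods in `(P, V)`; in
particular every element of a symmetric neighborhood of an element has the
same index as that element. -/
theorem stmt2 (v : ℝ) (hv : 0 < v) :
    symN Set.univ v zero = {zero} ∧
    symN Set.univ v inf = {inf} ∧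
    (∀ (b : Rpos) (j : ℕ+), symN Set.univ v (elt b j) =
      {x | ∃ a : Rpos, x = elt a j ∧
        a.1 ∈ Set.Ici (b.1 - (j : ℝ) * v) ∩ Set.Ioc 0 (b.1 + (j : ℝ) * v)}) ∧
    (∀ (b : Rpos) (j : ℕ+), ∀ x ∈ symN Set.univ v (elt b j),
      ∃ a : Rpos, x = elt a j) := by
  refine ⟨?_, ?_, ?_, ?_⟩
  · ext x
    cases x with
    | zero => simp [symN, nrel]
    | inf =>
      simp only [symN, Set.mem_setOf_eq, Set.mem_singleton_iff]
      constructor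
      · rintro ⟨_, h, _⟩; exact absurd h (by simp [nrel])
      · intro h; exact absurd h (by simp)
    | elt a i =>
      simp only [symN, Set.mem_setOf_eq, Set.mem_singleton_iff]
      constructor
      · rintro ⟨_, h, _⟩; exact absurd h (by simp [nrel])
      · intro h; exact absurd h (by simp)
  · ext x
    cases x with
    | zero =>
      simp only [symN, Set.mem_setOf_eq, Set.mem_singleton_iff]
      constructor
      · rintro ⟨_, _, h⟩; exact absurd h (by simp [nrel])
      · intro h; exact absurd h (by simp)
    | inf => simp [symN, nrel]
    | elt a i =>
      simp only [symN, Set.mem_setOf_eq, Set.mem_singleton_iff]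
      constructor
      · rintro ⟨_, _, h⟩; exact absurd h (by simp [nrel])
      · intro h; exact absurd h (by simp)
  · intro b j
    ext x
    cases x with
    | zero =>
      simp only [symN, Set.mem_setOf_eq]
      constructor
      · rintro ⟨_, _, h⟩; exact absurd h (by simp [nrel])
      · rintro ⟨a, h, _⟩; exact absurd h (by simp)
    | inf =>
      simp only [symN, Set.mem_setOf_eq]
      constructor
      · rintro ⟨_, h, _⟩; exact absurd h (by simp [nrel])
      · rintro ⟨a, h, _⟩; exact absurd h (by simp)
    | elt a i =>
      simp only [symN, Set.mem_setOf_eq, nrel, Set.mem_univ, true_and,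
        Set.mem_inter_iff, Set.mem_Ici, Set.mem_Ioc]
      constructor
      · rintro ⟨⟨hij, h1⟩, hji, h2⟩
        subst hij
        exact ⟨a, rfl, by linarith, a.2, by linarith⟩
      · rintro ⟨a', he, h1, h2, h3⟩
        cases he
        exact ⟨⟨rfl, by linarith⟩, rfl, by linarith⟩
  · intro b j x hx
    cases x with
    | zero => exact absurd hx.2.2 (by simp [nrel])
    | inf => exact absurd hx.2.1 (by simp [nrel])
    | elt a i =>
      obtain ⟨hij, _⟩ := hx.2.1
      exact ⟨a, by rw [hij]⟩


end CP
end

section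
/- Let (P,V) be a locally convex cone such that for each b ∈ P and v ∈ V there exists c ∈ v(b)v with a ≤ c for all a ∈ v(b)v (i.e., every symmetric neighborhood has a greatest element). Then (P,V) is barreled: for every barrel B ⊆ P² and every b ∈ P there exist v ∈ V and λ > 0 such that (a,b) ∈ λB for all a ∈ v(b)v. -/
open scoped NNReal

/-- A preordered cone: a commutative monoid with scalar multiplication by
nonnegative reals, carrying a preorder compatible with addition and scalar
multiplication. -/
class PreorderedCone (P : Type*) extends AddCommMonoid P, Module ℝ≥0 P, Preorder P where
  add_le_add_right' : ∀ {x y : P} (z : P), x ≤ y → x + z ≤ y + z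
  smul_le_smul' : ∀ (r : ℝ≥0) {x y : P}, x ≤ y → r • x ≤ r • y

/-- An abstract 0-neighborhood system on a preordered cone, encoded by the
relation `rel v a b`, meaning `a ≤ b + v`.  Together with `P` it constitutes a
locally convex cone `(P, V)`. -/
structure NbhdSystem (P : Type*) [PreorderedCone P] where
  /-- The index type of neighborhoods (the elements of `V`). -/
  V : Type
  /-- `rel v a b` means `a ≤ b + v`. -/
  rel : V → P → P → Prop
  /-- `a ≤ b` implies `a ≤ b + v`, since `0 < v`. -/
  rel_of_le : ∀ (v : V) {a b : P}, a ≤ b → rel v a b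
  /-- monotonicity of the relation in both arguments. -/
  rel_mono : ∀ (v : V) {a a' b b' : P}, a' ≤ a → b ≤ b' → rel v a b → rel v a' b'
  /-- `V` is directed downward. -/
  directed : ∀ u v : V, ∃ w : V, ∀ a b : P, rel w a b → rel u a b ∧ rel v a b
  /-- compatibility with addition: `a ≤ b + v` implies `a + c ≤ b + c + v`. -/
  rel_add : ∀ (v : V) (c : P) {a b : P}, rel v a b → rel v (a + c) (b + c)
  /-- closure of `V` under addition: `a ≤ b + u` and `b ≤ c + v` give
  `a ≤ c + (u + v)` for some `u + v ∈ V`. -/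
  add_mem : ∀ u v : V, ∃ w : V, ∀ a b c : P, rel u a b → rel v b c → rel w a c
  /-- closure of `V` under multiplication by positive scalars. -/
  smul_mem : ∀ (v : V) (r : ℝ≥0), 0 < r → ∃ w : V,
    ∀ a b : P, rel w (r • a) (r • b) ↔ rel v a b

variable {P : Type*} [PreorderedCone P]

/-- The symmetric neighborhood `v(b)v` of `b`. -/
def symN (N : NbhdSystem P) (v : N.V) (b : P) : Set P :=
  {a | N.rel v a b ∧ N.rel v b a}

/-- Membership in the dual cone `P*`: a linear functional `P → ℝ ∪ {+∞}`
which is (uniformly) continuous. -/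
def InDual (N : NbhdSystem P) (μ : P → EReal) : Prop :=
  μ 0 = 0 ∧ (∀ x, μ x ≠ ⊥) ∧
  (∀ x y : P, μ (x + y) = μ x + μ y) ∧
  (∀ (r : ℝ≥0) (x : P), μ (r • x) = ((r : ℝ) : EReal) * μ x) ∧
  ∃ v : N.V, ∀ a b : P, N.rel v a b → μ a ≤ μ b + 1

/-- `λ B = {(λx, λy) : (x,y) ∈ B}`. -/
def scaleSet (l : ℝ≥0) (B : Set (P × P)) : Set (P × P) :=
  (fun p : P × P => (l • p.1, l • p.2)) '' B

/-- `B ⊆ P²` is a barrel: a convex set satisfying (B1) and (B2). -/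
def IsBarrel (N : NbhdSystem P) (B : Set (P × P)) : Prop :=
  (∀ p ∈ B, ∀ q ∈ B, ∀ t : ℝ≥0, t ≤ 1 →
     (t • p.1 + (1 - t) • q.1, t • p.2 + (1 - t) • q.2) ∈ B) ∧
  (∀ b : P, ∃ v : N.V, ∀ a ∈ symN N v b,
     ∃ l : ℝ≥0, 0 < l ∧ (a, b) ∈ scaleSet l B) ∧
  (∀ a b : P, (a, b) ∉ B → ∃ μ : P → EReal, InDual N μ ∧
     μ b + 1 < μ a ∧ ∀ p ∈ B, μ p.1 ≤ μ p.2 + 1)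

/-!
Functionals in the dual cone are monotone, so by (B2) a barrel is closed under decreasing the
first coordinate of its pairs. Applying (B1) to the greatest element `c` of `v(b)v` gives
`(c, b) ∈ λB`, and every `a ∈ v(b)v` satisfies `a ≤ c`, hence `(a, b) ∈ λB`.
-/

theorem EReal.le_of_forall_nnreal_mul_le_mul_add_one {x y : EReal}
    (h : ∀ r : ℝ≥0, ((r : ℝ) : EReal) * x ≤ ((r : ℝ) : EReal) * y + 1) : x ≤ y := by
  by_contra! hyx
  obtain ⟨p, hyp, hpx⟩ := EReal.exists_between_coe_real hyx
  obtain ⟨q, hpq, hqx⟩ := EReal.exists_between_coe_real hpx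
  have hqp : 0 < q - p := _root_.sub_pos.mpr (EReal.coe_lt_coe_iff.mp hpq)
  obtain ⟨r, hr, hr_mul⟩ : ∃ r : ℝ, 0 ≤ r ∧ r * (q - p) = 2 :=
    ⟨2 / (q - p), by positivity, div_mul_cancel₀ _ hqp.ne'⟩
  have hr' : (0 : EReal) ≤ r := by exact_mod_cast hr
  have hrqp : (r : EReal) * q ≤ r * p + 1 :=
    calc (r : EReal) * q ≤ r * x := mul_le_mul_of_nonneg_left hqx.le hr'
      _ ≤ r * y + 1 := h ⟨r, hr⟩
      _ ≤ r * p + 1 := by gcongr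
  have hrqp : r * q ≤ r * p + 1 := by exact_mod_cast hrqp
  linarith

variable {N : NbhdSystem P}

/-- Scaling `a ≤ b` by `r` and using continuity gives `r μ(a) ≤ r μ(b) + 1` for every `r ≥ 0`. -/
theorem InDual.monotone {μ : P → EReal} (hμ : InDual N μ) : Monotone μ := by
  obtain ⟨-, -, -, hsmul, v, hv⟩ := hμ
  intro a b hab
  refine EReal.le_of_forall_nnreal_mul_le_mul_add_one fun r => ?_
  rw [← hsmul, ← hsmul]
  exact hv _ _ (N.rel_of_le v (PreorderedCone.smul_le_smul' r hab))

theorem mem_scaleSet_iff {l : ℝ≥0} (hl : l ≠ 0) {B : Set (P × P)} {a b : P} :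
    (a, b) ∈ scaleSet l B ↔ (l⁻¹ • a, l⁻¹ • b) ∈ B := by
  constructor
  · rintro ⟨⟨x, y⟩, hxy, hxy_eq⟩
    obtain ⟨rfl, rfl⟩ := Prod.ext_iff.mp hxy_eq
    simpa only [smul_smul, inv_mul_cancel₀ hl, one_smul] using hxy
  · intro h
    exact ⟨_, h, by simp only [smul_smul, mul_inv_cancel₀ hl, one_smul]⟩

theorem IsBarrel.mem_of_le_of_mem {B : Set (P × P)} (hB : IsBarrel N B) {a b c : P}
    (hcb : (c, b) ∈ B) (hac : a ≤ c) : (a, b) ∈ B := by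
  by_contra hab
  obtain ⟨μ, hμ, hlt, hle⟩ := hB.2.2 a b hab
  exact ((hμ.monotone hac).trans (hle _ hcb)).not_gt hlt

theorem IsBarrel.mem_scaleSet_of_le_of_mem {B : Set (P × P)} (hB : IsBarrel N B)
    {l : ℝ≥0} (hl : l ≠ 0) {a b c : P} (hcb : (c, b) ∈ scaleSet l B) (hac : a ≤ c) :
    (a, b) ∈ scaleSet l B := by
  rw [mem_scaleSet_iff hl] at hcb ⊢
  exact hB.mem_of_le_of_mem hcb (PreorderedCone.smul_le_smul' _ hac)

/-- if every symmetric neighborhood has a greatest element, then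
`(P, V)` is barreled. -/
theorem stmt4 (N : NbhdSystem P)
    (hmax : ∀ (b : P) (v : N.V), ∃ c ∈ symN N v b, ∀ a ∈ symN N v b, a ≤ c) :
    ∀ B : Set (P × P), IsBarrel N B → ∀ b : P,
      ∃ (v : N.V) (l : ℝ≥0), 0 < l ∧ ∀ a ∈ symN N v b, (a, b) ∈ scaleSet l B := by
  intro B hB b
  obtain ⟨v, hv⟩ := hB.2.1 b
  obtain ⟨c, hc, hc_max⟩ := hmax b v
  obtain ⟨l, hl, hcb⟩ := hv c hc
  exact ⟨v, l, hl, fun a ha => hB.mem_scaleSet_of_le_of_mem hl.ne' hcb (hc_max a ha)⟩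
end

section
/- Every nonzero continuous linear functional μ̃ on the locally convex cone (P,V) restricts to a continuous linear functional on some Q_i and equals +∞ outside Q_i: if μ̃ ∈ P* is nonzero, then there exists i ∈ ℕ such that μ̃(x) = +∞ for all x ∉ Q_i, and the restriction of μ̃ to Q_i lies in Q_i*. -/
open scoped NNReal ENNReal

namespace CP

/-!
Since `x + ∞_∞ = ∞_∞` for every `x`, a finite value `μ(∞_∞)` would force `μ = 0`; hence
`μ(∞_∞) = +∞`. If `μ(a_i)` is finite for some `a_i`, then `a_i + b_j = ∞_∞` for `j ≠ i` forces
`μ(b_j) = +∞`; if no such `a_i` exists, any `i` will do.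
-/

lemma _root_.EReal.eq_zero_of_add_eq_right {x y : EReal} (hy : y ≠ ⊥) (hy' : y ≠ ⊤)
    (h : x + y = y) : x = 0 := by
  lift y to ℝ using ⟨hy', hy⟩
  induction x <;> simp_all [← EReal.coe_add]

@[simp]
lemma add_inf (x : CP) : add x inf = inf := by
  cases x <;> rfl

lemma add_elt_of_ne {i j : ℕ+} (hij : i ≠ j) (a b : Rpos) : add (elt a i) (elt b j) = inf := by
  simp [add, hij]

lemma elt_mem_Q_iff {a : Rpos} {i j : ℕ+} : elt a j ∈ Q i ↔ j = i := by
  simp [Q]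

lemma exists_elt_of_notMem_Q {x : CP} {i : ℕ+} (hx : x ∉ Q i) :
    ∃ a j, j ≠ i ∧ x = elt a j := by
  cases x with
  | zero => exact absurd (Or.inl rfl) hx
  | inf => exact absurd (Or.inr (Or.inl rfl)) hx
  | elt a j => exact ⟨a, j, fun hj => hx (elt_mem_Q_iff.mpr hj), rfl⟩

lemma InDualOn.mono {s t : Set CP} {μ : CP → EReal} (h : InDualOn s μ) (hts : t ⊆ s) :
    InDualOn t μ := by
  obtain ⟨⟨h0, hbot, hadd, hsmul⟩, v, hv, hcont⟩ := h
  exact ⟨⟨h0, hbot, fun x hx y hy => hadd x (hts hx) y (hts hy),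
    fun r x hx => hsmul r x (hts hx)⟩, v, hv,
    fun x hx y hy => hcont x (hts hx) y (hts hy)⟩

lemma IsLinearOn.map_inf_eq_top {s : Set CP} {μ : CP → EReal} (h : IsLinearOn s μ)
    (hinf : inf ∈ s) (hne : ∃ x ∈ s, μ x ≠ 0) : μ inf = ⊤ := by
  obtain ⟨-, hbot, hadd, -⟩ := h
  obtain ⟨x, hx, hμx⟩ := hne
  by_contra htop
  have hsum : μ x + μ inf = μ inf := by rw [← hadd x hx inf hinf, add_inf]
  exact hμx (EReal.eq_zero_of_add_eq_right (hbot inf) htop hsum)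

lemma IsLinearOn.map_elt_eq_top {μ : CP → EReal} (h : IsLinearOn Set.univ μ)
    (hinf : μ inf = ⊤) {i j : ℕ+} (hij : i ≠ j) {a : Rpos} (ha : μ (elt a i) ≠ ⊤) (b : Rpos) :
    μ (elt b j) = ⊤ := by
  obtain ⟨-, -, hadd, -⟩ := h
  by_contra hb
  have hsum : μ (elt a i) + μ (elt b j) = ⊤ := by
    rw [← hadd _ trivial _ trivial, add_elt_of_ne hij, hinf]
  exact EReal.add_ne_top ha hb hsum

/-- every nonzero continuous linear functional on `(P, V)` is
`+∞` outside some `Q_i` and restricts to an element of `Q_i*`. -/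
theorem stmt10 (μ : CP → EReal) (h : InDualOn Set.univ μ)
    (hne : ∃ x : CP, μ x ≠ 0) :
    ∃ i : ℕ+, (∀ x ∉ Q i, μ x = ⊤) ∧ InDualOn (Q i) μ := by
  have hinf : μ inf = ⊤ :=
    h.1.map_inf_eq_top trivial (hne.imp fun x hx => ⟨trivial, hx⟩)
  suffices ∃ i : ℕ+, ∀ a j, j ≠ i → μ (elt a j) = ⊤ by
    obtain ⟨i, hi⟩ := this
    refine ⟨i, fun x hx => ?_, h.mono (Set.subset_univ _)⟩
    obtain ⟨a, j, hji, rfl⟩ := exists_elt_of_notMem_Q hx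
    exact hi a j hji
  by_cases hfin : ∃ i a, μ (elt a i) ≠ ⊤
  · obtain ⟨i, a, ha⟩ := hfin
    exact ⟨i, fun b j hji => h.1.map_elt_eq_top hinf (Ne.symm hji) ha b⟩
  · push Not at hfin
    exact ⟨1, fun a j _ => hfin j a⟩

end CP
end

section
/- In the locally convex cone (P,V), for each w ∈ V and k ∈ ℕ the extended functional (1/w)~_k (equal to a_k ↦ a/w on Q_k, 0 at 0₀, and +∞ outside Q_k) lies in the polar (w/k)°; moreover if a_i ⪯ b_j + v with j ∉ {0, k}, then (1/w)~_k(a_i) ≤ (1/w)~_k(b_j) + 1 for all v, w ∈ V. -/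
/-! `(1/w)~_k` is `+∞` at every `y ∉ {0₀} ∪ {b_k : b > 0}`, where the inequality is automatic.
At `y = 0₀` the relation `x ⪯ y + v` forces `x = 0₀`; at `y = b_k` it forces `x = 0₀` or `x = a_k`
with `a ≤ b + k · (w/k) = b + w`, which is `a/w ≤ b/w + 1`. -/

open scoped NNReal ENNReal

namespace CP

lemma _root_.EReal.le_top_add_one (x : EReal) : x ≤ ⊤ + 1 := by
  rw [EReal.top_add_of_ne_bot (by decide)]
  exact le_top

lemma fnLam_elt_self (c : ℝ) (k : ℕ+) (a : Rpos) :
    fnLam c k (elt a k) = ((c * a.1 : ℝ) : EReal) :=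
  if_pos rfl

lemma fnLam_elt_of_ne (c : ℝ) {k i : ℕ+} (a : Rpos) (hik : i ≠ k) : fnLam c k (elt a i) = ⊤ :=
  if_neg hik

lemma fnLam_nonneg {c : ℝ} (hc : 0 ≤ c) (k : ℕ+) (y : CP) : 0 ≤ fnLam c k y := by
  rcases y with _ | _ | ⟨b, j⟩
  · exact le_rfl
  · exact le_top
  · by_cases hjk : j = k
    · subst hjk
      rw [fnLam_elt_self]
      exact_mod_cast mul_nonneg hc b.2.le
    · rw [fnLam_elt_of_ne c b hjk]
      exact le_top

lemma fnLam_zero_le_add_one {c : ℝ} (hc : 0 ≤ c) (k : ℕ+) (y : CP) :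
    fnLam c k zero ≤ fnLam c k y + 1 :=
  add_nonneg (fnLam_nonneg hc k y) zero_le_one

lemma fnLam_le_add_one_of_nrel {c v : ℝ} (hc : 0 ≤ c) {k : ℕ+} (hcv : c * ((k : ℝ) * v) ≤ 1)
    {x y : CP} (h : nrel v x y) : fnLam c k x ≤ fnLam c k y + 1 := by
  match x, y, h with
  | zero, y, _ => exact fnLam_zero_le_add_one hc k y
  | x, inf, _ => exact EReal.le_top_add_one _
  | inf, zero, h | inf, elt _ _, h | elt _ _, zero, h => exact h.elim
  | elt a i, elt b _, ⟨rfl, hab⟩ =>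
    by_cases hik : i = k
    · subst hik
      rw [fnLam_elt_self, fnLam_elt_self]
      have : c * a.1 ≤ c * b.1 + 1 :=
        calc c * a.1 ≤ c * (b.1 + i * v) := mul_le_mul_of_nonneg_left hab hc
          _ = c * b.1 + c * (i * v) := mul_add _ _ _
          _ ≤ c * b.1 + 1 := by gcongr
      exact_mod_cast this
    · rw [fnLam_elt_of_ne c a hik, fnLam_elt_of_ne c b hik]
      exact EReal.le_top_add_one _

lemma fnLam_eq_top {c : ℝ} {k : ℕ+} {y : CP} (hy0 : y ≠ zero) (hyk : ∀ b : Rpos, y ≠ elt b k) :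
    fnLam c k y = ⊤ := by
  rcases y with _ | _ | ⟨b, j⟩
  · exact absurd rfl hy0
  · rfl
  · have hjk : j ≠ k := by
      rintro rfl
      exact hyk b rfl
    exact fnLam_elt_of_ne c b hjk

/-- the extended functional `(1/w)~_k` lies in the polar
`(w/k)°` of `(P, V)`; moreover if `a_i ⪯ b_j + v` with `j ∉ {0, k}` then
`(1/w)~_k(a_i) ≤ (1/w)~_k(b_j) + 1`. -/
theorem stmt11 (w : ℝ) (hw : 0 < w) (k : ℕ+) :
    (∀ x y : CP, nrel (w / (k : ℝ)) x y → fnLam w⁻¹ k x ≤ fnLam w⁻¹ k y + 1) ∧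
    (∀ v : ℝ, 0 < v → ∀ x y : CP, y ≠ zero → (∀ b : Rpos, y ≠ elt b k) →
      nrel v x y → fnLam w⁻¹ k x ≤ fnLam w⁻¹ k y + 1) := by
  have hc : 0 ≤ w⁻¹ := inv_nonneg.mpr hw.le
  have hcv : w⁻¹ * ((k : ℝ) * (w / k)) ≤ 1 := by
    rw [mul_div_cancel₀ w (by positivity), inv_mul_cancel₀ hw.ne']
  exact ⟨fun _ _ => fnLam_le_add_one_of_nrel hc hcv,
    fun _ _ _ _ hy0 hyk _ => fnLam_eq_top hy0 hyk ▸ EReal.le_top_add_one _⟩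

end CP
end

section
/- For fixed w > 0, the set B = ⋃_{j ∈ ℕ} B_j ⊆ P², where B_j = {(x,y) ∈ Q_j × Q_j : x ⪯ y + w/j}, satisfies barrel condition (B1) in (P,V): for every b ∈ P there is v ∈ V such that for every a ∈ v(b)v there is λ > 0 with (a,b) ∈ λB. -/
open scoped NNReal ENNReal

namespace CP

/-- `B = ⋃_j B_j` satisfies barrel condition (B1) in `(P, V)`. -/
theorem stmt14 (w : ℝ) (hw : 0 < w) :
    ∀ b : CP, ∃ v : ℝ, 0 < v ∧ ∀ a ∈ symN Set.univ v b,
      ∃ l : ℝ≥0, 0 < l ∧ (a, b) ∈ scaleSet l (BigB w) := by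
  have hsmul1 : ∀ x : CP, smul 1 x = x := by
    intro x
    cases x with
    | zero => simp [smul]
    | inf => simp [smul]
    | elt a i => simp [smul, Subtype.ext_iff]
  intro b
  cases b with
  | zero =>
      refine ⟨1, one_pos, ?_⟩
      intro a ha
      obtain ⟨-, h1, -⟩ := ha
      have haz : a = zero := by cases a <;> first | rfl | exact absurd h1 (by simp [nrel])
      subst haz
      refine ⟨1, one_pos, ⟨(zero, zero), ?_, by simp [hsmul1]⟩⟩
      exact Set.mem_iUnion.mpr ⟨1, ⟨Or.inl rfl, Or.inl rfl, trivial⟩⟩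
  | inf =>
      refine ⟨1, one_pos, ?_⟩
      intro a ha
      obtain ⟨-, -, h2⟩ := ha
      have haz : a = inf := by cases a <;> first | rfl | exact absurd h2 (by simp [nrel])
      subst haz
      refine ⟨1, one_pos, ⟨(inf, inf), ?_, by simp [hsmul1]⟩⟩
      exact Set.mem_iUnion.mpr ⟨1, ⟨Or.inr (Or.inl rfl), Or.inr (Or.inl rfl), trivial⟩⟩
  | elt c j =>
      refine ⟨w / (j : ℝ), by positivity, ?_⟩
      intro a ha
      obtain ⟨-, h1, h2⟩ := ha
      cases a with
      | zero => exact absurd h2 (by simp [nrel])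
      | inf => exact absurd h1 (by simp [nrel])
      | elt a' i =>
          obtain ⟨hij, hle⟩ := h1
          subst hij
          refine ⟨1, one_pos, ⟨(elt a' i, elt c i), ?_, by simp [hsmul1]⟩⟩
          exact Set.mem_iUnion.mpr ⟨i, ⟨Or.inr (Or.inr ⟨a', rfl⟩),
            Or.inr (Or.inr ⟨c, rfl⟩), rfl, hle⟩⟩

end CP
end

section
/- The dual cone of ℝ̄₊ = [0,+∞] with neighborhood system V = (0,∞) consists exactly of multiplication by nonnegative reals together with the functional 0̄ defined by 0̄(a) = 0 for a ∈ ℝ₊ and 0̄(+∞) = +∞. -/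
/-!
A member `μ` of the dual cone is bounded below by `-1` (continuity at `0`), so by homogeneity
it is nonnegative and thus takes values in `ℝ≥0∞`. On finite arguments it is then `x ↦ μ 1 * x`,
with `μ 1` finite by continuity, while `μ ∞ = μ ∞ + μ ∞` forces `μ ∞ ∈ {0, ∞}`, and `μ ∞ = 0`
forces `μ 1 = 0` since `μ ∞ = μ (1 + ∞) = μ 1 + μ ∞`.
-/

open scoped NNReal ENNReal

theorem Real.nonneg_of_forall_nnreal_mul_add_one_nonneg {t : ℝ} (h : ∀ r : ℝ≥0, 0 ≤ r * t + 1) :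
    0 ≤ t := by
  by_contra! ht
  have : 0 ≤ -2 / t * t + 1 := h ⟨-2 / t, div_nonneg_of_nonpos (by norm_num) ht.le⟩
  rw [div_mul_cancel₀ _ ht.ne] at this
  linarith

theorem ENNReal.eq_zero_or_eq_top_of_eq_add_self {t : ℝ≥0∞} (h : t = t + t) : t = 0 ∨ t = ∞ := by
  refine or_iff_not_imp_right.2 fun ht => ?_
  lift t to ℝ≥0 using ht
  norm_cast at h ⊢
  simpa using h

def MemDualCone (μ : ℝ≥0∞ → EReal) : Prop :=
  (∀ x, μ x ≠ ⊥) ∧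
  (∀ x y : ℝ≥0∞, μ (x + y) = μ x + μ y) ∧
  (∀ (r : ℝ≥0) (x : ℝ≥0∞), μ ((r : ℝ≥0∞) * x) = ((r : ℝ) : EReal) * μ x) ∧
  ∃ v : ℝ, 0 < v ∧ ∀ a b : ℝ≥0∞, a ≤ b + ENNReal.ofReal v → μ a ≤ μ b + 1

structure MemDualConeENNReal (f : ℝ≥0∞ → ℝ≥0∞) : Prop where
  map_add (x y : ℝ≥0∞) : f (x + y) = f x + f y
  map_smul (r : ℝ≥0) (x : ℝ≥0∞) : f (r * x) = r * f x
  exists_le_add_one : ∃ v : ℝ, 0 < v ∧ ∀ a b : ℝ≥0∞, a ≤ b + ENNReal.ofReal v → f a ≤ f b + 1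

theorem memDualCone_coe_iff {f : ℝ≥0∞ → ℝ≥0∞} :
    MemDualCone (fun x => (f x : EReal)) ↔ MemDualConeENNReal f := by
  simp only [MemDualCone, EReal.coe_ennreal_ne_bot, ne_eq, not_false_eq_true, implies_true,
    true_and, ← EReal.coe_ennreal_add, ← EReal.coe_nnreal_eq_coe_real, ← EReal.coe_ennreal_mul,
    ← EReal.coe_ennreal_one, EReal.coe_ennreal_eq_coe_ennreal_iff,
    EReal.coe_ennreal_le_coe_ennreal_iff]
  exact ⟨fun ⟨h₁, h₂, h₃⟩ => ⟨h₁, h₂, h₃⟩, fun h => ⟨h.1, h.2, h.3⟩⟩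

namespace MemDualCone

variable {μ : ℝ≥0∞ → EReal}

theorem map_zero (hμ : MemDualCone μ) : μ 0 = 0 := by
  simpa using hμ.2.2.1 0 0

theorem nonneg (hμ : MemDualCone μ) (x : ℝ≥0∞) : 0 ≤ μ x := by
  have h0 := hμ.map_zero
  obtain ⟨hbot, -, hsmul, v, -, hcont⟩ := hμ
  have hlower (y : ℝ≥0∞) : 0 ≤ μ y + 1 := by
    simpa [h0] using hcont 0 y (by simp)
  rcases eq_or_ne (μ x) ⊤ with htop | htop
  · simp [htop]
  lift μ x to ℝ using ⟨htop, hbot x⟩ with t ht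
  refine EReal.coe_nonneg.2 (Real.nonneg_of_forall_nnreal_mul_add_one_nonneg fun r => ?_)
  have := hlower (r * x)
  rwa [hsmul, ← ht, ← EReal.coe_mul, ← EReal.coe_one, ← EReal.coe_add, EReal.coe_nonneg] at this

theorem exists_eq_coe (hμ : MemDualCone μ) :
    ∃ f, MemDualConeENNReal f ∧ μ = fun x => (f x : EReal) := by
  have hμf : μ = fun x => ((μ x).toENNReal : EReal) :=
    funext fun x => (EReal.coe_toENNReal (hμ.nonneg x)).symm
  exact ⟨_, memDualCone_coe_iff.1 (hμf ▸ hμ), hμf⟩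

end MemDualCone

namespace MemDualConeENNReal

variable {f : ℝ≥0∞ → ℝ≥0∞}

theorem map_zero (hf : MemDualConeENNReal f) : f 0 = 0 := by
  simpa using hf.map_smul 0 0

theorem map_of_ne_top (hf : MemDualConeENNReal f) {x : ℝ≥0∞} (hx : x ≠ ∞) : f x = f 1 * x := by
  lift x to ℝ≥0 using hx
  simpa [mul_comm] using hf.map_smul x 1

theorem map_one_ne_top (hf : MemDualConeENNReal f) : f 1 ≠ ∞ := by
  intro h
  obtain ⟨v, hv, hcont⟩ := hf.exists_le_add_one
  have := hcont (ENNReal.ofReal v) 0 (by simp)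
  rw [hf.map_zero, zero_add, hf.map_of_ne_top ENNReal.ofReal_ne_top, h,
    ENNReal.top_mul (by simpa using hv)] at this
  exact ENNReal.one_ne_top (top_le_iff.1 this)

theorem map_top_eq_zero_or_top (hf : MemDualConeENNReal f) : f ∞ = 0 ∨ f ∞ = ∞ :=
  ENNReal.eq_zero_or_eq_top_of_eq_add_self (by rw [← hf.map_add, top_add])

theorem map_one_eq_zero_of_map_top_eq_zero (hf : MemDualConeENNReal f) (h : f ∞ = 0) : f 1 = 0 := by
  simpa [h, eq_comm] using hf.map_add 1 ∞

theorem eq_const_mul_or_eq_ite_top (hf : MemDualConeENNReal f) :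
    (∃ c : ℝ≥0, f = fun x => (c : ℝ≥0∞) * x) ∨ f = fun x => if x = ∞ then ∞ else 0 := by
  rcases hf.map_top_eq_zero_or_top with h0 | htop
  · refine Or.inl ⟨0, funext fun x => ?_⟩
    rcases eq_or_ne x ∞ with rfl | hx
    · simp [h0]
    · simp [hf.map_of_ne_top hx, hf.map_one_eq_zero_of_map_top_eq_zero h0]
  obtain ⟨c, hc⟩ : ∃ c : ℝ≥0, (c : ℝ≥0∞) = f 1 := WithTop.ne_top_iff_exists.1 hf.map_one_ne_top
  rcases eq_or_ne c 0 with rfl | hc0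
  · refine Or.inr (funext fun x => ?_)
    split_ifs with hx
    · rw [hx, htop]
    · rw [hf.map_of_ne_top hx, ← hc, ENNReal.coe_zero, zero_mul]
  · refine Or.inl ⟨c, funext fun x => ?_⟩
    rcases eq_or_ne x ∞ with rfl | hx
    · rw [htop, ENNReal.mul_top (by exact_mod_cast hc0)]
    · rw [hf.map_of_ne_top hx, ← hc]

theorem const_mul (c : ℝ≥0) : MemDualConeENNReal fun x => (c : ℝ≥0∞) * x := by
  refine ⟨fun x y => mul_add _ _ _, fun r x => mul_left_comm _ _ _,
    ((c : ℝ) + 1)⁻¹, by positivity, fun a b hab => ?_⟩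
  have hcv : (c : ℝ≥0∞) * ENNReal.ofReal ((c : ℝ) + 1)⁻¹ ≤ 1 := by
    rw [ENNReal.ofReal_inv_of_pos (by positivity)]
    calc (c : ℝ≥0∞) * (ENNReal.ofReal ((c : ℝ) + 1))⁻¹
        ≤ ENNReal.ofReal ((c : ℝ) + 1) * (ENNReal.ofReal ((c : ℝ) + 1))⁻¹ := by
          gcongr
          rw [← ENNReal.ofReal_coe_nnreal]
          exact ENNReal.ofReal_le_ofReal (by linarith)
      _ ≤ 1 := ENNReal.mul_inv_le_one _
  calc (c : ℝ≥0∞) * a ≤ c * b + c * ENNReal.ofReal ((c : ℝ) + 1)⁻¹ := by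
        rw [← mul_add]; gcongr
    _ ≤ c * b + 1 := by gcongr

theorem ite_top : MemDualConeENNReal fun x => if x = ∞ then ∞ else 0 := by
  refine ⟨fun x y => ?_, fun r x => ?_, 1, one_pos, fun a b hab => ?_⟩
  · by_cases hx : x = ∞ <;> by_cases hy : y = ∞ <;> simp [hx, hy]
  · by_cases hx : x = ∞ <;> by_cases hr : r = 0 <;> simp [hx, hr, ENNReal.mul_eq_top]
  · by_cases ha : a = ∞
    · have hb : b = ∞ := by simpa [ha] using hab
      simp [ha, hb]
    · split_ifs <;> simp

end MemDualConeENNReal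

/-- the dual cone of `ℝ̄₊ = [0, +∞]` with `V = (0, ∞)` consists
exactly of the multiplications by nonnegative reals together with the
functional `0̄` with `0̄(a) = 0` for `a ∈ ℝ₊` and `0̄(+∞) = +∞`. -/
theorem stmt19 (μ : ℝ≥0∞ → EReal) :
    ((∀ x, μ x ≠ ⊥) ∧
     (∀ x y : ℝ≥0∞, μ (x + y) = μ x + μ y) ∧
     (∀ (r : ℝ≥0) (x : ℝ≥0∞), μ ((r : ℝ≥0∞) * x) = ((r : ℝ) : EReal) * μ x) ∧
     (∃ v : ℝ, 0 < v ∧ ∀ a b : ℝ≥0∞, a ≤ b + ENNReal.ofReal v →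
        μ a ≤ μ b + 1)) ↔
    ((∃ c : ℝ≥0, ∀ x : ℝ≥0∞, μ x = ((c : ℝ) : EReal) * (x : EReal)) ∨
     (∀ x : ℝ≥0∞, μ x = if x = ⊤ then (⊤ : EReal) else 0)) := by
  have coe_const_mul (c : ℝ≥0) (x : ℝ≥0∞) :
      ((c * x : ℝ≥0∞) : EReal) = ((c : ℝ) : EReal) * x := by
    rw [EReal.coe_ennreal_mul, EReal.coe_nnreal_eq_coe_real]
  have coe_ite_top (x : ℝ≥0∞) :
      ((if x = ∞ then ∞ else 0 : ℝ≥0∞) : EReal) = if x = ⊤ then ⊤ else 0 := by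
    split_ifs <;> simp
  change MemDualCone μ ↔ _
  constructor
  · intro hμ
    obtain ⟨f, hf, rfl⟩ := hμ.exists_eq_coe
    rcases hf.eq_const_mul_or_eq_ite_top with ⟨c, rfl⟩ | rfl
    · exact Or.inl ⟨c, coe_const_mul c⟩
    · exact Or.inr coe_ite_top
  · rintro (⟨c, hc⟩ | h)
    · rw [funext fun x => (hc x).trans (coe_const_mul c x).symm]
      exact memDualCone_coe_iff.2 (MemDualConeENNReal.const_mul c)
    · rw [funext fun x => (h x).trans (coe_ite_top x).symm]
      exact memDualCone_coe_iff.2 MemDualConeENNReal.ite_top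
end
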